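/- For every subset I ⊆ {1,…,m} and all homogeneous elements x ∈ A_d and y ∈ A_e, the following identity holds: c(I,[x,y]) = Σ_{I = A ⊔ B} (−1)^{θ(A,B) + d·|B|} [c(A,x), c(B,y)], where the sum runs over all ordered pairs of disjoint subsets A, B with A ∪ B = I. -/

import Mathlib

universe u

section GradedCommutators

variable {R : Type u} [Ring R] {m : ℕ}

/-- The sign `(−1)^z` as an element of the ring `R`, for `z : ℤ`. -/
def sgn (R : Type u) [Ring R] (z : ℤ) : R := (((-1 : Rˣ) ^ z : Rˣ) : R)

/-- The graded commutator `[a,b] = a·b − (−1)^{pq}·b·a` of elements `a`, `b` of degrees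
`p`, `q`. -/
def gbrk (p q : ℤ) (a b : R) : R := a * b - sgn R (p * q) * (b * a)

/-- The iterated commutator `[u_{i₁},[u_{i₂},…,[u_{i_k},x]…]]` along a list `i₁,…,i_k`,
where the `u_i` have degree `1` and `x` has degree `d`. -/
def cList (u : Fin m → R) (d : ℤ) (x : R) : List (Fin m) → R
  | [] => x
  | i :: l => gbrk 1 (d + l.length) (u i) (cList u d x l)

/-- `c(I,x) = [u_{i₁},[u_{i₂},…,[u_{i_k},x]…]]` for `I = {i₁ < … < i_k}`,
where `x` has degree `d`. -/
def cNest (u : Fin m → R) (d : ℤ) (x : R) (I : Finset (Fin m)) : R :=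
  cList u d x (I.sort (· ≤ ·))

/-- `û_I = u_{i₁} ⋯ u_{i_k}` for `I = {i₁ < … < i_k}`. -/
def uHat (u : Fin m → R) (I : Finset (Fin m)) : R :=
  ((I.sort (· ≤ ·)).map u).prod

/-- The Koszul sign exponent `θ(A,B) = #{(a,b) ∈ A × B | a > b}`. -/
def theta (A B : Finset (Fin m)) : ℕ :=
  ((A ×ˢ B).filter fun p => p.2 < p.1).card


/-! ### Auxiliary lemmas -/

lemma sgn_eq_ite (z : ℤ) : sgn R z = if Even z then (1 : R) else -1 := by
  unfold sgn
  rcases Int.even_or_odd z with hz | hz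
  · rw [if_pos hz, hz.neg_one_zpow]; simp
  · rw [if_neg (Int.not_even_iff_odd.mpr hz)]
    obtain ⟨c, rfl⟩ := hz
    rw [zpow_add, Even.neg_one_zpow ⟨c, Int.two_mul c⟩, one_mul]
    simp

lemma sgn_congr {z w : ℤ} (h : z = w) : sgn R z = sgn R w := by rw [h]

lemma sgn_add (a b : ℤ) : sgn R (a + b) = sgn R a * sgn R b := by
  unfold sgn; rw [zpow_add]; simp

lemma sgn_zero : sgn R 0 = 1 := by simp [sgn]

lemma sgn_cases (z : ℤ) : sgn R z = 1 ∨ sgn R z = -1 := by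
  rw [sgn_eq_ite]; split <;> simp

lemma gbrk_sum {ι : Type*} (p q : ℤ) (a : R) (s : Finset ι) (f : ι → R) :
    gbrk p q a (∑ j ∈ s, f j) = ∑ j ∈ s, gbrk p q a (f j) := by
  simp [gbrk, Finset.mul_sum, Finset.sum_mul, Finset.sum_sub_distrib]

lemma gbrk_sgn_mul (p q : ℤ) (z : ℤ) (a b : R) :
    gbrk p q a (sgn R z * b) = sgn R z * gbrk p q a b := by
  simp only [gbrk]
  rcases sgn_cases (R := R) z with h | h <;> rw [h] <;> noncomm_ring

/-- The formal graded Jacobi identity, for `a` of degree `1`, `b` of degree `p` and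
`c` of degree `q`. -/
lemma gbrk_jacobi (p q : ℤ) (a b c : R) :
    gbrk 1 (p + q) a (gbrk p q b c)
      = gbrk (1 + p) q (gbrk 1 p a b) c
        + sgn R p * gbrk p (1 + q) b (gbrk 1 q a c) := by
  simp only [gbrk]
  rw [sgn_congr (show 1 * (p + q) = p + q by ring), sgn_add,
    sgn_congr (show (1 + p) * q = q + p * q by ring), sgn_add,
    sgn_congr (show p * (1 + q) = p + p * q by ring), sgn_add,
    sgn_congr (show 1 * p = p by ring), sgn_congr (show 1 * q = q by ring)]
  rcases sgn_cases (R := R) p with hp | hp <;>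
    rcases sgn_cases (R := R) q with hq | hq <;>
      rcases sgn_cases (R := R) (p * q) with hpq | hpq <;>
        rw [hp, hq, hpq] <;> noncomm_ring

lemma theta_eq_sum (A B : Finset (Fin m)) :
    theta A B = ∑ a ∈ A, ∑ b ∈ B, if b < a then 1 else 0 := by
  rw [theta, Finset.card_filter, Finset.sum_product]

lemma theta_insert_left {A B : Finset (Fin m)} {i : Fin m} (hiA : i ∉ A)
    (h : ∀ b ∈ B, i < b) : theta (insert i A) B = theta A B := by
  rw [theta_eq_sum, Finset.sum_insert hiA, theta_eq_sum,
    Finset.sum_eq_zero (fun b hb => if_neg (asymm (h b hb))), zero_add]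

lemma theta_insert_right {A B : Finset (Fin m)} {i : Fin m} (hiB : i ∉ B)
    (h : ∀ a ∈ A, i < a) : theta A (insert i B) = theta A B + A.card := by
  rw [theta_eq_sum, theta_eq_sum, Finset.card_eq_sum_ones, ← Finset.sum_add_distrib]
  exact Finset.sum_congr rfl fun a ha => by
    rw [Finset.sum_insert hiB, if_pos (h a ha), add_comm]

lemma cNest_insert {u : Fin m → R} {d : ℤ} {x : R} {i : Fin m} {I : Finset (Fin m)}
    (h : ∀ b ∈ I, i < b) (hi : i ∉ I) :
    cNest u d x (insert i I) = gbrk 1 (d + I.card) (u i) (cNest u d x I) := by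
  rw [cNest, Finset.sort_insert _ (fun b hb => (h b hb).le) hi]
  simp [cList, cNest, Finset.length_sort]

end GradedCommutators

/-- `c(I,[x,y]) = Σ_{I = A ⊔ B} (−1)^{θ(A,B)+d·|B|} [c(A,x), c(B,y)]`
for every `I ⊆ {1,…,m}` and homogeneous `x ∈ A_d`, `y ∈ A_e`;  here `c(A,x)` has degree
`d + |A|` and `c(B,y)` has degree `e + |B|`. -/
theorem cNest_bracket {k R : Type u} [CommRing k] [Ring R] [Algebra k R] {m : ℕ}
    (𝒜 : ℤ → Submodule k R) [GradedAlgebra 𝒜]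
    (u : Fin m → R) (hu : ∀ i, u i ∈ 𝒜 1)
    (I : Finset (Fin m)) (d e : ℤ) (x y : R) (hx : x ∈ 𝒜 d) (hy : y ∈ 𝒜 e) :
    cNest u (d + e) (gbrk d e x y) I
      = ∑ A ∈ I.powerset,
          sgn R ((theta A (I \ A) : ℤ) + d * ((I \ A).card : ℤ))
            * gbrk (d + (A.card : ℤ)) (e + ((I \ A).card : ℤ))
                (cNest u d x A) (cNest u e y (I \ A)) := by
  induction I using Finset.induction_on_min with
  | empty => simp [cNest, cList, theta, sgn_zero]
  | insert i I hmin ih =>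
    have hiI : i ∉ I := fun h => lt_irrefl _ (hmin i h)
    rw [cNest_insert (fun b hb => hmin b hb) hiI, ih, gbrk_sum,
      Finset.sum_powerset_insert hiI, ← Finset.sum_add_distrib]
    refine Finset.sum_congr rfl fun A hA => ?_
    have hAI : A ⊆ I := Finset.mem_powerset.mp hA
    have hiA : i ∉ A := fun h => hiI (hAI h)
    have hiB : i ∉ I \ A := fun h => hiI (Finset.mem_sdiff.mp h).1
    have hBI : I \ A ⊆ I := Finset.sdiff_subset
    have hcard := Finset.card_sdiff_add_card_eq_card hAI
    rw [gbrk_sgn_mul,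
      show (d + e) + (I.card : ℤ)
        = (d + (A.card : ℤ)) + (e + ((I \ A).card : ℤ)) by omega,
      gbrk_jacobi,
      ← cNest_insert (fun b hb => hmin b (hAI hb)) hiA,
      ← cNest_insert (fun b hb => hmin b (hBI hb)) hiB,
      Finset.insert_sdiff_of_notMem _ hiA,
      Finset.insert_sdiff_insert, Finset.sdiff_insert_of_notMem hiI,
      theta_insert_right hiB (fun a ha => hmin a (hAI ha)),
      theta_insert_left hiA (fun b hb => hmin b (hBI hb)),
      Finset.card_insert_of_notMem hiB, Finset.card_insert_of_notMem hiA]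
    push_cast
    rw [show (1 + (d + (A.card : ℤ))) = d + ((A.card : ℤ) + 1) by ring,
      show (1 + (e + ((I \ A).card : ℤ))) = e + (((I \ A).card : ℤ) + 1) by ring,
      mul_add, ← mul_assoc, ← sgn_add,
      sgn_congr (show ((theta A (I \ A) : ℤ) + d * ((I \ A).card : ℤ))
          + (d + (A.card : ℤ))
        = ((theta A (I \ A) : ℤ) + (A.card : ℤ)) + d * (((I \ A).card : ℤ) + 1) by ring),
      add_comm]
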